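/- Let f : [−1,1] → ℝ be defined by f(x) = ½(erf(k(x+κ)) + erf(k(κ−x))) with k > 0 and κ = (Δ+δ)/2 where 0 < δ < Δ. Then f is an even function of x, satisfies 0 < f(x) < 1 for all x, and for k = (√2/δ)√(log(2/(πε²))) with ε ∈ (0, √(2/(eπ))): f(x) ≥ 1 − ε for |x| ≤ Δ/2, and f(x) ≤ ε for |x| ≥ Δ/2 + δ. -/

import Mathlib

open MeasureTheory Set Real Filter intervalIntegral

/-- The error function `erf x = (2/√π) ∫₀ˣ e^{−t²} dt`. -/
noncomputable def erf (x : ℝ) : ℝ :=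
  (2 / Real.sqrt Real.pi) * ∫ t in (0 : ℝ)..x, Real.exp (-t ^ 2)

private lemma stmt17_hI : MeasureTheory.Integrable fun t : ℝ => Real.exp (-t ^ 2) := by
  simpa using integrable_exp_neg_mul_sq (b := 1) one_pos

private lemma stmt17_tail_pos (x : ℝ) : 0 < ∫ t in Ioi x, Real.exp (-t ^ 2) := by
  rw [setIntegral_pos_iff_support_of_nonneg_ae]
  · have : (Function.support fun t : ℝ => Real.exp (-t ^ 2)) = univ := by
      ext t; simp [Function.support, (Real.exp_pos _).ne']
    rw [this, univ_inter]
    simp [Real.volume_Ioi]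
  · filter_upwards with t using (Real.exp_pos _).le
  · exact stmt17_hI.integrableOn

private lemma stmt17_head_pos (x : ℝ) : 0 < ∫ t in Iic x, Real.exp (-t ^ 2) := by
  rw [setIntegral_pos_iff_support_of_nonneg_ae]
  · have : (Function.support fun t : ℝ => Real.exp (-t ^ 2)) = univ := by
      ext t; simp [Function.support, (Real.exp_pos _).ne']
    rw [this, univ_inter]
    simp [Real.volume_Iic]
  · filter_upwards with t using (Real.exp_pos _).le
  · exact stmt17_hI.integrableOn

private lemma stmt17_total : (∫ t : ℝ, Real.exp (-t ^ 2)) = Real.sqrt Real.pi := by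
  simpa using integral_gaussian 1

private lemma stmt17_key (x : ℝ) : (∫ t in (0:ℝ)..x, Real.exp (-t ^ 2))
    = Real.sqrt Real.pi / 2 - ∫ t in Ioi x, Real.exp (-t ^ 2) := by
  have h1 : ∀ y : ℝ, (∫ t in Iic y, Real.exp (-t ^ 2)) + ∫ t in Ioi y, Real.exp (-t ^ 2)
      = Real.sqrt Real.pi := by
    intro y
    rw [intervalIntegral.integral_Iic_add_Ioi stmt17_hI.integrableOn stmt17_hI.integrableOn,
      stmt17_total]
  rw [← intervalIntegral.integral_Iic_sub_Iic stmt17_hI.integrableOn stmt17_hI.integrableOn]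
  have h2 := h1 x
  have h3 := h1 0
  have h4 : (∫ t in Ioi (0:ℝ), Real.exp (-t ^ 2)) = Real.sqrt Real.pi / 2 := by
    simpa using integral_gaussian_Ioi 1
  linarith

private lemma stmt17_erf_eq (x : ℝ) :
    erf x = 1 - (2 / Real.sqrt Real.pi) * ∫ t in Ioi x, Real.exp (-t ^ 2) := by
  rw [erf, stmt17_key]
  have h : Real.sqrt Real.pi ≠ 0 := by positivity
  field_simp

private lemma stmt17_erf_lt_one (x : ℝ) : erf x < 1 := by
  rw [stmt17_erf_eq]
  have h : 0 < (2 / Real.sqrt Real.pi) * ∫ t in Ioi x, Real.exp (-t ^ 2) := by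
    have := stmt17_tail_pos x
    positivity
  linarith

private lemma stmt17_erf_strictMono : StrictMono erf := by
  intro a b hab
  have h1 : 0 < ∫ t in a..b, Real.exp (-t ^ 2) :=
    intervalIntegral_pos_of_pos stmt17_hI.intervalIntegrable (fun t => Real.exp_pos _) hab
  have h2 : (∫ t in (0:ℝ)..a, Real.exp (-t ^ 2)) + ∫ t in a..b, Real.exp (-t ^ 2)
      = ∫ t in (0:ℝ)..b, Real.exp (-t ^ 2) :=
    integral_add_adjacent_intervals stmt17_hI.intervalIntegrable stmt17_hI.intervalIntegrable
  have hs : (0:ℝ) < 2 / Real.sqrt Real.pi := by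
    have := Real.sqrt_pos.mpr Real.pi_pos; positivity
  unfold erf
  nlinarith

private lemma stmt17_erf_neg (x : ℝ) : erf (-x) = - erf x := by
  unfold erf
  have h : (∫ t in (0:ℝ)..(-x), Real.exp (-t ^ 2))
      = ∫ t in (0:ℝ)..(-x), Real.exp (-(-t) ^ 2) := by
    congr 1; ext t; ring_nf
  rw [h, intervalIntegral.integral_comp_neg (fun t => Real.exp (-t ^ 2)),
    neg_neg, neg_zero, intervalIntegral.integral_symm]
  ring

private lemma stmt17_tail_mul (y : ℝ) :
    (∫ t in Ioi y, t * Real.exp (-t ^ 2)) = Real.exp (-y ^ 2) / 2 := by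
  have A : ∀ x : ℝ, HasDerivAt (fun t : ℝ => -Real.exp (-t ^ 2) / 2)
      (x * Real.exp (-x ^ 2)) x := by
    intro x
    have h1 : HasDerivAt (fun t : ℝ => -t ^ 2) (-(2 * x)) x := by
      simpa using ((hasDerivAt_pow 2 x).fun_neg)
    have h2 := (h1.exp).fun_neg.div_const 2
    exact h2.congr_deriv (by ring)
  have B : Tendsto (fun t : ℝ => -Real.exp (-t ^ 2) / 2) atTop (nhds 0) := by
    have h1 : Tendsto (fun t : ℝ => -t ^ 2) atTop atBot := by
      simpa using (tendsto_pow_atTop (n := 2) two_ne_zero).neg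
    have := (Real.tendsto_exp_atBot.comp h1).neg.div_const 2
    simpa using this
  have hint : IntegrableOn (fun t : ℝ => t * Real.exp (-t ^ 2)) (Ioi y) := by
    have := integrable_mul_exp_neg_mul_sq (b := 1) one_pos
    simpa using this.integrableOn
  have := MeasureTheory.integral_Ioi_of_hasDerivAt_of_tendsto' (fun x _ => A x) hint B
  rw [this]; ring

private lemma stmt17_tail_le (y : ℝ) (hy : 0 < y) :
    (∫ t in Ioi y, Real.exp (-t ^ 2)) ≤ Real.exp (-y ^ 2) / (2 * y) := by
  have hmono : (∫ t in Ioi y, Real.exp (-t ^ 2))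
      ≤ ∫ t in Ioi y, (t / y) * Real.exp (-t ^ 2) := by
    apply MeasureTheory.setIntegral_mono_on stmt17_hI.integrableOn
    · have := integrable_mul_exp_neg_mul_sq (b := 1) one_pos
      have h2 : MeasureTheory.Integrable fun t : ℝ => (t / y) * Real.exp (-t ^ 2) := by
        have h3 := this.div_const y
        apply h3.congr
        · filter_upwards with t
          simp; ring
      exact h2.integrableOn
    · exact measurableSet_Ioi
    · intro t ht
      have ht' : y < t := ht
      have h1 : 1 ≤ t / y := (one_le_div hy).mpr ht'.le
      nlinarith [Real.exp_pos (-t ^ 2)]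
  have heq : (∫ t in Ioi y, (t / y) * Real.exp (-t ^ 2))
      = (1 / y) * ∫ t in Ioi y, t * Real.exp (-t ^ 2) := by
    rw [← MeasureTheory.integral_const_mul]
    congr 1; ext t; ring
  rw [heq, stmt17_tail_mul] at hmono
  calc (∫ t in Ioi y, Real.exp (-t ^ 2)) ≤ 1 / y * (Real.exp (-y ^ 2) / 2) := hmono
    _ = Real.exp (-y ^ 2) / (2 * y) := by field_simp

/-- The smoothed symmetric indicator
`f(x) = ½(erf(k(x+κ)) + erf(k(κ−x)))` with `κ = (Δ+δ)/2`, `0 < δ < Δ`, and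
`k = (√2/δ)·√(log(2/(πε²)))` for `ε ∈ (0, √(2/(eπ)))`, is even, takes values in
`(0,1)`, is `≥ 1 − ε` for `|x| ≤ Δ/2`, and `≤ ε` for `|x| ≥ Δ/2 + δ`. -/
theorem stmt17 (Δ δ κ k ε : ℝ) (hδ : 0 < δ) (hΔ : δ < Δ)
    (hκ : κ = (Δ + δ) / 2)
    (hε : 0 < ε) (hε' : ε < Real.sqrt (2 / (Real.exp 1 * Real.pi)))
    (hk : k = (Real.sqrt 2 / δ) * Real.sqrt (Real.log (2 / (Real.pi * ε ^ 2))))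
    (f : ℝ → ℝ)
    (hf : ∀ x : ℝ, f x = (1 / 2) * (erf (k * (x + κ)) + erf (k * (κ - x)))) :
    (∀ x : ℝ, f (-x) = f x) ∧
    (∀ x : ℝ, 0 < f x ∧ f x < 1) ∧
    (∀ x : ℝ, |x| ≤ Δ / 2 → 1 - ε ≤ f x) ∧
    (∀ x : ℝ, Δ / 2 + δ ≤ |x| → f x ≤ ε) := by
  have hπ := Real.pi_pos
  set L := Real.log (2 / (Real.pi * ε ^ 2)) with hLdef
  -- ε² < 2/(eπ)
  have hεsq : ε ^ 2 < 2 / (Real.exp 1 * Real.pi) := (Real.lt_sqrt hε.le).mp hε'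
  have hX : Real.exp 1 < 2 / (Real.pi * ε ^ 2) := by
    rw [lt_div_iff₀ (by positivity)]
    rw [lt_div_iff₀ (by positivity)] at hεsq
    nlinarith
  have hL1 : 1 ≤ L := (Real.le_log_iff_exp_le (by positivity)).mpr hX.le
  have hL0 : 0 < L := lt_of_lt_of_le one_pos hL1
  have hk0 : 0 < k := by
    rw [hk]
    exact mul_pos (div_pos (Real.sqrt_pos.mpr two_pos) hδ) (Real.sqrt_pos.mpr hL0)
  set y₀ : ℝ := k * δ / 2 with hy₀def
  have hy₀ : 0 < y₀ := by positivity
  have hkδ : k * δ = Real.sqrt 2 * Real.sqrt L := by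
    rw [hk]; field_simp
  have hy2 : y₀ ^ 2 = L / 2 := by
    have h2 : (Real.sqrt 2) ^ 2 = 2 := Real.sq_sqrt (by norm_num)
    have hLs : (Real.sqrt L) ^ 2 = L := Real.sq_sqrt hL0.le
    rw [hy₀def, div_pow, hkδ, mul_pow, h2, hLs]
    ring
  -- exp(-y₀²)² = π ε² / 2
  have hE : Real.exp (-y₀ ^ 2) ^ 2 = Real.pi * ε ^ 2 / 2 := by
    rw [sq, ← Real.exp_add, hy2]
    have : -(L / 2) + -(L / 2) = -L := by ring
    rw [this, Real.exp_neg, hLdef, Real.exp_log (by positivity)]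
    field_simp
  have hsπ : (0:ℝ) < Real.sqrt Real.pi := Real.sqrt_pos.mpr hπ
  -- exp(-y₀²) ≤ ε √π y₀
  have hEb : Real.exp (-y₀ ^ 2) ≤ ε * Real.sqrt Real.pi * y₀ := by
    rw [← pow_le_pow_iff_left₀ (Real.exp_pos _).le (by positivity) two_ne_zero]
    have hπs : (Real.sqrt Real.pi) ^ 2 = Real.pi := Real.sq_sqrt hπ.le
    rw [hE, mul_pow, mul_pow, hπs, hy2]
    nlinarith
  -- erf y₀ ≥ 1 - ε
  have herf0 : 1 - ε ≤ erf y₀ := by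
    rw [stmt17_erf_eq]
    have h1 := stmt17_tail_le y₀ hy₀
    have h2 : Real.exp (-y₀ ^ 2) / (2 * y₀) ≤ ε * Real.sqrt Real.pi / 2 := by
      rw [div_le_div_iff₀ (by positivity) two_pos]
      nlinarith
    have h3 : (2 / Real.sqrt Real.pi) * (∫ t in Ioi y₀, Real.exp (-t ^ 2))
        ≤ (2 / Real.sqrt Real.pi) * (ε * Real.sqrt Real.pi / 2) := by
      apply mul_le_mul_of_nonneg_left (le_trans h1 h2) (by positivity)
    have h4 : (2 / Real.sqrt Real.pi) * (ε * Real.sqrt Real.pi / 2) = ε := by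
      field_simp
    linarith [h3.trans_eq h4]
  have E1 : ∀ y : ℝ, y₀ ≤ y → 1 - ε ≤ erf y := fun y h =>
    le_trans herf0 (stmt17_erf_strictMono.monotone h)
  have E2 : ∀ y : ℝ, y ≤ -y₀ → erf y ≤ -(1 - ε) := by
    intro y h
    have := stmt17_erf_strictMono.monotone h
    rw [stmt17_erf_neg] at this
    linarith [E1 y₀ le_rfl]
  have hκ0 : 0 < κ := by rw [hκ]; linarith
  refine ⟨?_, ?_, ?_, ?_⟩
  · intro x
    rw [hf, hf, show -x + κ = κ - x by ring, show κ - -x = x + κ by ring, add_comm]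
  · intro x
    have hsum : -(k * (x + κ)) < k * (κ - x) := by nlinarith [mul_pos hk0 hκ0]
    have hodd := stmt17_erf_strictMono hsum
    rw [stmt17_erf_neg] at hodd
    rw [hf x]
    constructor
    · linarith
    · linarith [stmt17_erf_lt_one (k * (x + κ)), stmt17_erf_lt_one (k * (κ - x))]
  · intro x hx
    rw [abs_le] at hx
    have hb1 : δ / 2 ≤ x + κ := by rw [hκ]; linarith
    have hb2 : δ / 2 ≤ κ - x := by rw [hκ]; linarith
    have hm1 := mul_le_mul_of_nonneg_left hb1 hk0.le
    have hm2 := mul_le_mul_of_nonneg_left hb2 hk0.le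
    have he : k * (δ / 2) = y₀ := by rw [hy₀def]; ring
    have h1 : y₀ ≤ k * (x + κ) := by linarith
    have h2 : y₀ ≤ k * (κ - x) := by linarith
    have := E1 _ h1
    have := E1 _ h2
    rw [hf x]; linarith
  · intro x hx
    rw [le_abs] at hx
    rw [hf x]
    rcases hx with hx | hx
    · have hb : κ - x ≤ -(δ / 2) := by rw [hκ]; linarith
      have hm := mul_le_mul_of_nonneg_left hb hk0.le
      have he : k * (-(δ / 2)) = -y₀ := by rw [hy₀def]; ring
      have h1 : k * (κ - x) ≤ -y₀ := by linarith
      have := E2 _ h1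
      have := stmt17_erf_lt_one (k * (x + κ))
      linarith
    · have hb : x + κ ≤ -(δ / 2) := by rw [hκ]; linarith
      have hm := mul_le_mul_of_nonneg_left hb hk0.le
      have he : k * (-(δ / 2)) = -y₀ := by rw [hy₀def]; ring
      have h1 : k * (x + κ) ≤ -y₀ := by linarith
      have := E2 _ h1
      have := stmt17_erf_lt_one (k * (κ - x))
      linarith
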